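/- arXiv:1210.5835 — 2 statements merged into one kernel-verified Lean document; each statement's English description precedes it below -/
import Mathlib

section
/- Let (X_n) be a sequence of square integrable real random variables with E[X_n X_k] = 0 for all n ≠ k (an orthogonal sequence). If ∑_{n=1}^∞ E[X_n^2] (log n)^2 / n^2 < ∞, then (1/n) ∑_{k=1}^n X_k converges to 0 almost surely. -/
/-!
Menchov's dyadic chaining: an initial segment of a block of length `2 ^ M` is a disjoint union of
at most one aligned dyadic subblock of each length `2 ^ j`, `j ≤ M`, so by Cauchy–Schwarz the
square of its sum is at most `M + 1` times the sum of the squares of all dyadic subblock sums;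
by orthogonality the expectation of the latter is `(M + 1) ∑ E[X_k²]` over the block.
For the block `(2 ^ m, 2 ^ (m + 1)]` put `w_m = (m + 1) D_m / 4 ^ m`, `D_m` the dyadic square sum.
Since `(m + 1)² / 4 ^ m ≲ (log k)² / k²` on that block, `∑ E[w_m] < ∞`, hence `∑ w_m < ∞` almost
surely. On that event every partial sum inside block `m` is at most `2 ^ m √w_m` with `w_m → 0`,
and summing over the blocks up to `n`, `|S_n| / n ≲ 2 ^ (-m) ∑_{l ≤ m} 2 ^ l √w_l → 0`.
-/

open MeasureTheory Filter Finset Topology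

theorem sum_range_mul_eq_sum_sum_range {M : Type*} [AddCommMonoid M] (g : ℕ → M) (N c : ℕ) :
    ∑ k ∈ range (N * c), g k = ∑ i ∈ range N, ∑ k ∈ range c, g (i * c + k) := by
  induction N with
  | zero => simp
  | succ N ih => rw [add_one_mul, sum_range_add, ih, sum_range_succ]

theorem sum_range_two_pow_eq_add_sum_sum {M : Type*} [AddCommMonoid M] (g : ℕ → M) (n : ℕ) :
    ∑ k ∈ range (2 ^ n), g k =
      g 0 + ∑ m ∈ range n, ∑ k ∈ range (2 ^ m), g (2 ^ m + k) := by
  induction n with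
  | zero => simp
  | succ n ih => rw [pow_succ, mul_two, sum_range_add, ih, sum_range_succ, add_assoc]

def dyadicBlockSum (g : ℕ → ℝ) (j i : ℕ) : ℝ := ∑ k ∈ range (2 ^ j), g (i * 2 ^ j + k)

def dyadicSquareSum (g : ℕ → ℝ) (M : ℕ) : ℝ :=
  ∑ j ∈ range (M + 1), ∑ i ∈ range (2 ^ (M - j)), dyadicBlockSum g j i ^ 2

theorem dyadicSquareSum_nonneg (g : ℕ → ℝ) (M : ℕ) : 0 ≤ dyadicSquareSum g M :=
  sum_nonneg fun _ _ => sum_nonneg fun _ _ => sq_nonneg _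

theorem dyadicBlockSum_two_pow_add (g : ℕ → ℝ) {j M : ℕ} (hj : j ≤ M) (i : ℕ) :
    dyadicBlockSum (fun k => g (2 ^ M + k)) j i = dyadicBlockSum g j (i + 2 ^ (M - j)) := by
  have h : 2 ^ (M - j) * 2 ^ j = 2 ^ M := by rw [← pow_add, Nat.sub_add_cancel hj]
  simp only [dyadicBlockSum, add_mul, h, add_right_comm, add_comm (2 ^ M)]

theorem abs_sum_range_le_of_dyadicBlockSum_le {b : ℕ → ℝ} :
    ∀ (M : ℕ) (g : ℕ → ℝ), (∀ j < M, ∀ i < 2 ^ (M - j), |dyadicBlockSum g j i| ≤ b j) →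
      ∀ r < 2 ^ M, |∑ k ∈ range r, g k| ≤ ∑ j ∈ range M, b j := by
  intro M
  induction M with
  | zero => intro g _ r hr; simp_all
  | succ M ih =>
    intro g hb r hr
    have hbM : 0 ≤ b M := (abs_nonneg _).trans (hb M M.lt_succ_self 0 (by simp))
    rw [sum_range_succ]
    rcases lt_or_ge r (2 ^ M) with hrM | hrM
    · have := ih g (fun j hj i hi => hb j (hj.trans M.lt_succ_self) i
        (hi.trans_le (Nat.pow_le_pow_right two_pos (by omega)))) r hrM
      linarith
    · obtain ⟨s, rfl⟩ := Nat.exists_eq_add_of_le hrM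
      have hs : s < 2 ^ M := by rw [pow_succ] at hr; omega
      have hfirst : |∑ k ∈ range (2 ^ M), g k| ≤ b M := by
        simpa [dyadicBlockSum] using hb M M.lt_succ_self 0 (by simp)
      have hrest := ih (fun k => g (2 ^ M + k)) (fun j hj i hi => by
        rw [dyadicBlockSum_two_pow_add g hj.le]
        refine hb j (hj.trans M.lt_succ_self) _ ?_
        rw [Nat.sub_add_comm hj.le, pow_succ]
        omega) s hs
      rw [sum_range_add]
      linarith [abs_add_le (∑ k ∈ range (2 ^ M), g k) (∑ k ∈ range s, g (2 ^ M + k))]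

theorem sq_sum_range_le_dyadicSquareSum (g : ℕ → ℝ) {M r : ℕ} (hr : r ≤ 2 ^ M) :
    (∑ k ∈ range r, g k) ^ 2 ≤ (M + 1) * dyadicSquareSum g M := by
  set Q : ℕ → ℝ := fun j => ∑ i ∈ range (2 ^ (M - j)), dyadicBlockSum g j i ^ 2
  have hQ : ∀ j, ∀ i < 2 ^ (M - j), |dyadicBlockSum g j i| ≤ √(Q j) := fun j i hi =>
    Real.abs_le_sqrt (single_le_sum (f := fun i => dyadicBlockSum g j i ^ 2)
      (fun _ _ => sq_nonneg _) (mem_range.mpr hi))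
  have habs : |∑ k ∈ range r, g k| ≤ ∑ j ∈ range (M + 1), √(Q j) := by
    rw [sum_range_succ]
    rcases hr.lt_or_eq with hr | rfl
    · linarith [abs_sum_range_le_of_dyadicBlockSum_le M g (fun j _ => hQ j) r hr,
        Real.sqrt_nonneg (Q M)]
    · have hfull := hQ M 0 (by simp)
      simp only [dyadicBlockSum, zero_mul, zero_add] at hfull
      linarith [sum_nonneg fun j (_ : j ∈ range M) => Real.sqrt_nonneg (Q j)]
  calc (∑ k ∈ range r, g k) ^ 2 ≤ (∑ j ∈ range (M + 1), √(Q j)) ^ 2 := by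
        rw [← sq_abs]; exact pow_le_pow_left₀ (abs_nonneg _) habs 2
    _ ≤ (M + 1) * ∑ j ∈ range (M + 1), √(Q j) ^ 2 := by
        simpa using sq_sum_le_card_mul_sum_sq (s := range (M + 1)) (f := fun j => √(Q j))
    _ = (M + 1) * dyadicSquareSum g M := by
        simp only [Real.sq_sqrt (sum_nonneg fun _ _ => sq_nonneg _), Q, dyadicSquareSum]

theorem tendsto_sum_range_two_pow_mul_div_two_pow {u : ℕ → ℝ}
    (hu : Tendsto u atTop (𝓝 0)) :
    Tendsto (fun m : ℕ => (∑ l ∈ range (m + 1), 2 ^ l * u l) / 2 ^ m) atTop (𝓝 0) := by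
  obtain ⟨C, hC⟩ := hu.norm.bddAbove_range
  have hC0 : 0 ≤ C := (norm_nonneg _).trans (hC ⟨0, rfl⟩)
  -- the sum is `∑ i ≤ m, (1 / 2) ^ i * u (m - i)`, to which Tannery's theorem applies
  let F : ℕ → ℕ → ℝ := fun m i => if i ≤ m then (1 / 2) ^ i * u (m - i) else 0
  have hF : ∀ m, (∑ l ∈ range (m + 1), 2 ^ l * u l) / 2 ^ m = ∑' i, F m i := by
    intro m
    rw [tsum_eq_sum (s := range (m + 1)) fun i hi => if_neg (by simpa using hi),
      ← sum_range_reflect, sum_div]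
    refine sum_congr rfl fun i hi => ?_
    have him : i ≤ m := Nat.lt_succ_iff.mp (mem_range.mp hi)
    rw [if_pos him, Nat.add_sub_cancel, pow_sub₀ _ two_ne_zero him, one_div, inv_pow]
    field_simp
  have hpt : ∀ i, Tendsto (F · i) atTop (𝓝 0) := fun i => by
    refine (tendsto_congr' ?_).mp
      (by simpa using (hu.comp (tendsto_sub_atTop_nat i)).const_mul ((1 / 2) ^ i))
    filter_upwards [eventually_ge_atTop i] with m hm
    simp [F, hm]
  have hbd : ∀ m i, ‖F m i‖ ≤ C * (1 / 2) ^ i := fun m i => by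
    simp only [F]
    split_ifs
    · rw [norm_mul, mul_comm, norm_pow, norm_div, norm_one, Real.norm_two]
      exact mul_le_mul_of_nonneg_right (hC ⟨m - i, rfl⟩) (by positivity)
    · simpa using hC0
  simpa [hF] using tendsto_tsum_of_dominated_convergence (summable_geometric_two.mul_left C)
    hpt (Eventually.of_forall hbd)

theorem tendsto_inv_mul_sum_range_of_sq_dyadic_le {f w : ℕ → ℝ}
    (hw : Tendsto w atTop (𝓝 0))
    (hf : ∀ m r, r ≤ 2 ^ m → (∑ k ∈ range r, f (2 ^ m + k)) ^ 2 ≤ 4 ^ m * w m) :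
    Tendsto (fun n : ℕ => (n : ℝ)⁻¹ * ∑ k ∈ range n, f k) atTop (𝓝 0) := by
  have hblock : ∀ m r, r ≤ 2 ^ m → |∑ k ∈ range r, f (2 ^ m + k)| ≤ 2 ^ m * √(w m) := by
    intro m r hr
    have h := Real.abs_le_sqrt (hf m r hr)
    rwa [Real.sqrt_mul (by positivity),
      show (4 : ℝ) ^ m = (2 ^ m) ^ 2 by rw [← pow_mul, mul_comm, pow_mul]; norm_num,
      Real.sqrt_sq (by positivity)] at h
  set B : ℕ → ℝ := fun m => |f 0| + ∑ l ∈ range (m + 1), 2 ^ l * √(w l)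
  have hS : ∀ m r, r ≤ 2 ^ m → |∑ k ∈ range (2 ^ m + r), f k| ≤ B m := by
    intro m r hr
    rw [sum_range_add, sum_range_two_pow_eq_add_sum_sum, add_assoc]
    have hfull : |∑ l ∈ range m, ∑ k ∈ range (2 ^ l), f (2 ^ l + k)| ≤
        ∑ l ∈ range m, 2 ^ l * √(w l) :=
      (abs_sum_le_sum_abs _ _).trans (sum_le_sum fun l _ => hblock l _ le_rfl)
    calc _ ≤ |f 0| + (|∑ l ∈ range m, ∑ k ∈ range (2 ^ l), f (2 ^ l + k)| +
          |∑ k ∈ range r, f (2 ^ m + k)|) :=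
          (abs_add_le _ _).trans (by gcongr; exact abs_add_le _ _)
      _ ≤ B m := by simp only [B, sum_range_succ]; linarith [hblock m r hr]
  have hB : Tendsto (fun m => B m / 2 ^ m) atTop (𝓝 0) := by
    simpa [B, add_div] using (tendsto_const_nhds.div_atTop
      (tendsto_pow_atTop_atTop_of_one_lt one_lt_two)).add
      (tendsto_sum_range_two_pow_mul_div_two_pow (by simpa using hw.sqrt))
  have hlog : Tendsto (Nat.log 2) atTop atTop :=
    tendsto_atTop_atTop.2 fun b => ⟨2 ^ b, fun n hn => Nat.le_log_of_pow_le one_lt_two hn⟩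
  refine squeeze_zero_norm' ?_ (hB.comp hlog)
  filter_upwards [eventually_ne_atTop 0] with n hn
  have hlow : 2 ^ Nat.log 2 n ≤ n := Nat.pow_log_le_self 2 hn
  have hup : n < 2 ^ (Nat.log 2 n + 1) := Nat.lt_pow_succ_log_self one_lt_two n
  obtain ⟨r, hnr⟩ := Nat.exists_eq_add_of_le hlow
  have hSn := hS (Nat.log 2 n) r (by rw [pow_succ] at hup; omega)
  rw [← hnr] at hSn
  rw [norm_mul, norm_inv, Real.norm_natCast, inv_mul_eq_div, Real.norm_eq_abs]
  exact div_le_div₀ ((abs_nonneg _).trans hSn) hSn (by positivity) (by exact_mod_cast hlow)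

theorem summable_sum_range_two_pow {b : ℕ → ℝ} (hb0 : ∀ k, 0 ≤ b k) (hb : Summable b) :
    Summable fun m => ∑ k ∈ range (2 ^ m), b (2 ^ m + k) := by
  refine summable_of_sum_range_le (c := ∑' k, b k) (fun m => sum_nonneg fun _ _ => hb0 _)
    fun M => ?_
  calc ∑ m ∈ range M, ∑ k ∈ range (2 ^ m), b (2 ^ m + k)
      ≤ b 0 + ∑ m ∈ range M, ∑ k ∈ range (2 ^ m), b (2 ^ m + k) :=
        le_add_of_nonneg_left (hb0 0)
    _ = ∑ k ∈ range (2 ^ M), b k := (sum_range_two_pow_eq_add_sum_sum b M).symm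
    _ ≤ ∑' k, b k := hb.sum_le_tsum _ fun k _ => hb0 k

theorem sq_succ_div_four_pow_le {m n : ℕ} (h1 : 2 ^ m < n) (h2 : n ≤ 2 ^ (m + 1)) :
    ((m : ℝ) + 1) ^ 2 / 4 ^ m ≤ 16 / Real.log 2 ^ 2 * (Real.log n ^ 2 / n ^ 2) := by
  have hlog2 : 0 < Real.log 2 := Real.log_pos one_lt_two
  have hn2 : (2 : ℝ) ≤ n := by
    have : 1 ≤ 2 ^ m := Nat.one_le_two_pow
    exact_mod_cast (by omega : 2 ≤ n)
  have hlog : ((m : ℝ) + 1) * Real.log 2 ≤ 2 * Real.log n := by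
    have hm : (m : ℝ) * Real.log 2 ≤ Real.log n := by
      rw [← Real.log_pow]
      exact Real.log_le_log (by positivity) (by exact_mod_cast h1.le)
    linarith [Real.log_le_log two_pos hn2]
  have hsq : (n : ℝ) ^ 2 / 4 ≤ 4 ^ m := by
    have : (n : ℝ) ≤ 2 * 2 ^ m := by exact_mod_cast (pow_succ' 2 m) ▸ h2
    nlinarith [show (4 : ℝ) ^ m = 2 ^ m * 2 ^ m by rw [← mul_pow]; norm_num]
  calc ((m : ℝ) + 1) ^ 2 / 4 ^ m
      = (((m : ℝ) + 1) * Real.log 2) ^ 2 / (Real.log 2 ^ 2 * 4 ^ m) := by field_simp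
    _ ≤ (2 * Real.log n) ^ 2 / (Real.log 2 ^ 2 * (n ^ 2 / 4)) := by gcongr
    _ = 16 / Real.log 2 ^ 2 * (Real.log n ^ 2 / n ^ 2) := by field_simp; ring

section Orthogonal

variable {α : Type*} [MeasurableSpace α] {μ : Measure α}

theorem ae_summable_norm_of_summable_integral_norm {E : Type*} [NormedAddCommGroup E]
    {f : ℕ → α → E} (hf : ∀ n, Integrable (f n) μ)
    (hs : Summable fun n => ∫ x, ‖f n x‖ ∂μ) :
    ∀ᵐ x ∂μ, Summable fun n => ‖f n x‖ := by
  refine summable_norm_of_tsum_eLpNorm_ne_top le_rfl (fun n => (hf n).1) ?_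
  simp_rw [eLpNorm_one_eq_lintegral_enorm, ← ofReal_integral_norm_eq_lintegral_enorm (hf _),
    ← ENNReal.ofReal_tsum_of_nonneg (fun n => integral_nonneg fun x => norm_nonneg _) hs]
  exact ENNReal.ofReal_ne_top

theorem integral_sq_sum_of_orthogonal {ι : Type*} {Y : ι → α → ℝ}
    (hY : ∀ i, MemLp (Y i) 2 μ) (horth : Pairwise fun i j => ∫ x, Y i x * Y j x ∂μ = 0)
    (s : Finset ι) :
    ∫ x, (∑ i ∈ s, Y i x) ^ 2 ∂μ = ∑ i ∈ s, ∫ x, Y i x ^ 2 ∂μ := by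
  have hint : ∀ i j, Integrable (fun x => Y i x * Y j x) μ := fun i j =>
    (hY i).integrable_mul (hY j)
  simp_rw [sq, sum_mul_sum]
  rw [integral_finsetSum _ fun i _ => integrable_finsetSum _ fun j _ => hint i j]
  refine sum_congr rfl fun i hi => ?_
  rw [integral_finsetSum _ fun j _ => hint i j, sum_eq_single_of_mem i hi]
  exact fun j _ hji => horth hji.symm

theorem memLp_dyadicBlockSum {Y : ℕ → α → ℝ} (hY : ∀ k, MemLp (Y k) 2 μ) (j i : ℕ) :
    MemLp (fun x => dyadicBlockSum (fun k => Y k x) j i) 2 μ :=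
  memLp_finsetSum _ fun _ _ => hY _

theorem integrable_dyadicSquareSum {Y : ℕ → α → ℝ} (hY : ∀ k, MemLp (Y k) 2 μ) (M : ℕ) :
    Integrable (fun x => dyadicSquareSum (fun k => Y k x) M) μ :=
  integrable_finsetSum _ fun _ _ => integrable_finsetSum _ fun _ _ =>
    (memLp_dyadicBlockSum hY _ _).integrable_sq

theorem integral_dyadicSquareSum {Y : ℕ → α → ℝ} (hY : ∀ k, MemLp (Y k) 2 μ)
    (horth : Pairwise fun k l => ∫ x, Y k x * Y l x ∂μ = 0) (M : ℕ) :
    ∫ x, dyadicSquareSum (fun k => Y k x) M ∂μ =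
      (M + 1) * ∑ k ∈ range (2 ^ M), ∫ x, Y k x ^ 2 ∂μ := by
  have hlevel : ∀ j ∈ range (M + 1),
      ∫ x, ∑ i ∈ range (2 ^ (M - j)), dyadicBlockSum (fun k => Y k x) j i ^ 2 ∂μ =
        ∑ k ∈ range (2 ^ M), ∫ x, Y k x ^ 2 ∂μ := by
    intro j hj
    have hjM : 2 ^ (M - j) * 2 ^ j = 2 ^ M := by
      rw [← pow_add, Nat.sub_add_cancel (Nat.lt_succ_iff.mp (mem_range.mp hj))]
    rw [integral_finsetSum _ fun i _ => (memLp_dyadicBlockSum hY _ _).integrable_sq, ← hjM,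
      sum_range_mul_eq_sum_sum_range]
    refine sum_congr rfl fun i _ => integral_sq_sum_of_orthogonal (fun k => hY _) ?_ _
    exact fun k l hkl => horth (by simpa using hkl)
  simp only [dyadicSquareSum]
  rw [integral_finsetSum _ fun j _ => integrable_finsetSum _ fun i _ =>
    (memLp_dyadicBlockSum hY _ _).integrable_sq, sum_congr rfl hlevel, sum_const, card_range,
    nsmul_eq_mul]
  push_cast
  ring

theorem summable_integral_dyadicSquareSum_div_four_pow {X : ℕ → α → ℝ}
    (hL2 : ∀ n, MemLp (X n) 2 μ) (horth : Pairwise fun n k => ∫ x, X n x * X k x ∂μ = 0)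
    (hsum : Summable fun n : ℕ => (∫ x, X n x ^ 2 ∂μ) * Real.log n ^ 2 / (n : ℝ) ^ 2) :
    Summable fun m : ℕ =>
      ∫ x, (m + 1) * dyadicSquareSum (fun k => X (2 ^ m + k + 1) x) m / 4 ^ m ∂μ := by
  set C : ℝ := 16 / Real.log 2 ^ 2
  have hσ : ∀ n, 0 ≤ ∫ x, X n x ^ 2 ∂μ := fun n => integral_nonneg fun x => sq_nonneg _
  have hterm : ∀ n : ℕ, 0 ≤ (∫ x, X n x ^ 2 ∂μ) * Real.log n ^ 2 / (n : ℝ) ^ 2 := fun n =>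
    div_nonneg (mul_nonneg (hσ n) (sq_nonneg _)) (sq_nonneg _)
  have hdom := summable_sum_range_two_pow (fun k => mul_nonneg (by positivity) (hterm (k + 1)))
    (((summable_nat_add_iff 1).mpr hsum).mul_left C)
  refine hdom.of_nonneg_of_le (fun m => integral_nonneg fun x => div_nonneg
    (mul_nonneg (by positivity) (dyadicSquareSum_nonneg _ _)) (by positivity)) fun m => ?_
  rw [integral_div, integral_const_mul,
    integral_dyadicSquareSum (fun k => hL2 _) (fun k l hkl => horth (by simpa using hkl)),
    ← mul_assoc, mul_sum, sum_div]
  refine sum_le_sum fun k hk => ?_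
  have h1 : 2 ^ m < 2 ^ m + k + 1 := by omega
  have h2 : 2 ^ m + k + 1 ≤ 2 ^ (m + 1) := by
    rw [pow_succ]; have := mem_range.mp hk; omega
  calc ((m : ℝ) + 1) * (m + 1) * (∫ x, X (2 ^ m + k + 1) x ^ 2 ∂μ) / 4 ^ m
      = ((m : ℝ) + 1) ^ 2 / 4 ^ m * ∫ x, X (2 ^ m + k + 1) x ^ 2 ∂μ := by ring
    _ ≤ C * (Real.log ↑(2 ^ m + k + 1) ^ 2 / ↑(2 ^ m + k + 1) ^ 2) *
          ∫ x, X (2 ^ m + k + 1) x ^ 2 ∂μ :=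
        mul_le_mul_of_nonneg_right (sq_succ_div_four_pow_le h1 h2) (hσ _)
    _ = C * ((∫ x, X (2 ^ m + k + 1) x ^ 2 ∂μ) * Real.log ↑(2 ^ m + k + 1) ^ 2 /
          (↑(2 ^ m + k + 1) : ℝ) ^ 2) := by ring

end Orthogonal

theorem rademacher_menchov_orthogonal_sln_general
    {Ω : Type*} [MeasureSpace Ω]
    (X : ℕ → Ω → ℝ)
    (hL2 : ∀ n, MemLp (X n) 2 (volume : Measure Ω))
    (horth : ∀ n k, n ≠ k → ∫ ω, X n ω * X k ω = 0)
    (hsum : Summable (fun n : ℕ => (∫ ω, (X n ω) ^ 2) * (Real.log n) ^ 2 / (n : ℝ) ^ 2)) :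
    ∀ᵐ ω ∂(volume : Measure Ω),
      Tendsto (fun n : ℕ => (n : ℝ)⁻¹ * ∑ k ∈ Finset.Icc 1 n, X k ω) atTop (𝓝 0) := by
  set w : ℕ → Ω → ℝ := fun m ω =>
    (m + 1) * dyadicSquareSum (fun k => X (2 ^ m + k + 1) ω) m / 4 ^ m
  have hw_int : ∀ m, Integrable (w m) := fun m =>
    ((integrable_dyadicSquareSum (fun k => hL2 _) m).const_mul _).div_const _
  have hw0 : ∀ m ω, 0 ≤ w m ω := fun m ω =>
    div_nonneg (mul_nonneg (by positivity) (dyadicSquareSum_nonneg _ _)) (by positivity)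
  have hw_sum : Summable fun m => ∫ ω, ‖w m ω‖ := by
    simpa only [Real.norm_of_nonneg (hw0 _ _)] using
      summable_integral_dyadicSquareSum_div_four_pow hL2 horth hsum
  filter_upwards [ae_summable_norm_of_summable_integral_norm hw_int hw_sum] with ω hω
  have hlim := tendsto_inv_mul_sum_range_of_sq_dyadic_le (f := fun k => X (k + 1) ω)
    hω.of_norm.tendsto_atTop_zero fun m r hr => ?_
  · refine hlim.congr fun n => ?_
    rw [range_eq_Ico, ← Ico_add_one_right_eq_Icc, sum_Ico_add' (X · ω)]
  · calc _ ≤ (m + 1) * dyadicSquareSum (fun k => X (2 ^ m + k + 1) ω) m :=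
          sq_sum_range_le_dyadicSquareSum _ hr
      _ = 4 ^ m * w m ω := by simp only [w]; field_simp

/-- Rademacher-Menchov for orthogonal sequences with `aₙ = 1/n`, combined with
Kronecker's lemma: `(1/n) ∑_{k=1}^n X_k → 0` almost surely. -/
theorem rademacher_menchov_orthogonal_sln
    {Ω : Type*} [MeasureSpace Ω] [IsProbabilityMeasure (volume : Measure Ω)]
    (X : ℕ → Ω → ℝ)
    (hL2 : ∀ n, MemLp (X n) 2 (volume : Measure Ω))
    (horth : ∀ n k, n ≠ k → ∫ ω, X n ω * X k ω = 0)
    (hsum : Summable (fun n : ℕ => (∫ ω, (X n ω) ^ 2) * (Real.log n) ^ 2 / (n : ℝ) ^ 2)) :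
    ∀ᵐ ω ∂(volume : Measure Ω),
      Tendsto (fun n : ℕ => (n : ℝ)⁻¹ * ∑ k ∈ Finset.Icc 1 n, X k ω) atTop (𝓝 0) :=
  rademacher_menchov_orthogonal_sln_general X hL2 horth hsum
end

section
/- Let a, b, c, d, σ_a², σ_b², σ_c², σ_d² be real numbers with σ_a² ≥ 0, σ_b² ≥ 0, σ_c² > 0, σ_d² > 0, a² + σ_a² < 1, b² + σ_b² < 1. Define s_1 = (c+d)/(2-(a+b)) and s_2 = 2/(2-(σ_a²+σ_b²+a²+b²)) · ((ac+bd)(c+d)/(2-(a+b)) + (σ_c²+σ_d²+c²+d²)/2). Then s_2 - s_1² > 0. -/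
/-- Positivity of the determinant `s₂ - s₁²` of the limit matrix `C`. -/
theorem det_C_pos (a b c d σa2 σb2 σc2 σd2 : ℝ)
    (hσa : 0 ≤ σa2) (hσb : 0 ≤ σb2) (hσc : 0 < σc2) (hσd : 0 < σd2)
    (ha : a ^ 2 + σa2 < 1) (hb : b ^ 2 + σb2 < 1) :
    2 / (2 - (σa2 + σb2 + a ^ 2 + b ^ 2)) *
        ((a * c + b * d) * (c + d) / (2 - (a + b)) +
          (σc2 + σd2 + c ^ 2 + d ^ 2) / 2)
      - ((c + d) / (2 - (a + b))) ^ 2 > 0 := by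
  have ha1 : a < 1 := by nlinarith [sq_nonneg (a - 1)]
  have hb1 : b < 1 := by nlinarith [sq_nonneg (b - 1)]
  have hE : 0 < 2 - (a + b) := by linarith
  have hD : 0 < 2 - (σa2 + σb2 + a ^ 2 + b ^ 2) := by linarith
  have key : 2 / (2 - (σa2 + σb2 + a ^ 2 + b ^ 2)) *
        ((a * c + b * d) * (c + d) / (2 - (a + b)) +
          (σc2 + σd2 + c ^ 2 + d ^ 2) / 2)
      - ((c + d) / (2 - (a + b))) ^ 2 =
      ((2 - (a + b)) ^ 2 * (σc2 + σd2) + (c + d) ^ 2 * (σa2 + σb2) +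
        2 * (a * d - b * c + c - d) ^ 2) /
        ((2 - (σa2 + σb2 + a ^ 2 + b ^ 2)) * (2 - (a + b)) ^ 2) := by
    field_simp
    ring
  rw [gt_iff_lt, key]
  positivity
end
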